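/- arXiv:1811.03753 — 6 statements merged into one kernel-verified Lean document; each statement's English description precedes it below -/
import Mathlib

section
/- For any ultrafilter D on V, the relation ≤ on Q_D is transitive (and reflexive), so Q_D is a partial order: if p₁ ≤ p₂ and p₂ ≤ p₃ then p₁ ≤ p₃. -/
open Set

/-- `V = ⊕_{n<ω} 𝔽₂`, realized as finitely supported functions `ℕ →₀ 𝔽₂`. -/
abbrev V : Type := ℕ →₀ ZMod 2

/-- The convex hull (in `ω`) of a finite set of natural numbers. -/
def hull (s : Finset ℕ) : Set ℕ := {k | ∃ a ∈ s, ∃ b ∈ s, a ≤ k ∧ k ≤ b}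

/-- the translate `x + A` of a set `A ⊆ V`. -/
def vset (x : V) (A : Set V) : Set V := (fun a => x + a) '' A

/-- the span (as a set) of a finite set of vectors of `V`. -/
def spanOf (s : Finset V) : Set V := (Submodule.span (ZMod 2) (s : Set V) : Set V)

/-- A condition in the forcing `ℚ_D`: a pair `(u, 𝒜)` with `u ⊆ V` finite containing `0`,
the convex hulls of supports of distinct members of `u` disjoint, and `𝒜 ⊆ D` finite. -/
structure Cond (D : Ultrafilter V) where
  u : Finset V
  A : Finset (Set V)
  zero_mem : (0 : V) ∈ u
  supp_disj : ∀ x ∈ u, ∀ y ∈ u, x ≠ y → Disjoint (hull x.support) (hull y.support)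
  mem_D : ∀ B ∈ A, (B : Set V) ∈ D

/-- The order on `ℚ_D` from Definition 3. -/
def Cond.le {D : Ultrafilter V} (p q : Cond D) : Prop :=
  -- (B)(a)
  p.u ⊆ q.u ∧
  (∀ x ∈ p.u, ∀ y ∈ q.u \ p.u, ∀ i ∈ x.support, ∀ j ∈ y.support, i < j) ∧
  -- (B)(b)
  p.A ⊆ q.A ∧
  -- (B)(c)
  (∀ A ∈ q.A, A ∉ p.A →
    (∀ B ∈ p.A, A ⊆ B) ∧
    (∀ B ∈ p.A, ∀ x ∈ spanOf p.u, vset x B ∈ D → A ⊆ vset x B)) ∧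
  -- (B)(d)
  (∀ x ∈ spanOf p.u, ∀ y ∈ spanOf (q.u \ p.u), ∀ A ∈ p.A, vset x A ∈ D →
    y ∈ vset x A ∪ {0} ∧ vset (x + y) A ∈ D)

/-!
Reflexivity and clauses (a)–(c) of transitivity are bookkeeping. For clause (d), a vector of
`span(u₃ \ u₁)` splits as `y₂ + y₃` with `y₂ ∈ span(u₂ \ u₁)` and `y₃ ∈ span(u₃ \ u₂)`; applying
(d) for `p₁ ≤ p₂` at `x` and then for `p₂ ≤ p₃` at `x + y₂` gives both conclusions, since in
characteristic 2, `y₃ = x + y₂ + a` means `y₂ + y₃ = x + a`.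
-/

lemma spanOf_mono {s t : Finset V} (h : s ⊆ t) : spanOf s ⊆ spanOf t :=
  Submodule.span_mono (Finset.coe_subset.2 h)

lemma mem_spanOf_sdiff_of_subset {u₁ u₂ u₃ : Finset V} (h₁₂ : u₁ ⊆ u₂) (h₂₃ : u₂ ⊆ u₃)
    {y : V} (hy : y ∈ spanOf (u₃ \ u₁)) :
    ∃ y₂ ∈ spanOf (u₂ \ u₁), ∃ y₃ ∈ spanOf (u₃ \ u₂), y₂ + y₃ = y := by
  rw [spanOf, ← Finset.sdiff_union_sdiff_cancel h₂₃ h₁₂, Finset.coe_union,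
    Submodule.span_union, sup_comm, SetLike.mem_coe,
    Submodule.mem_sup] at hy
  exact hy

lemma add_mem_vset_union_zero {x y₂ y₃ : V} {A : Set V}
    (hy₂ : y₂ ∈ vset x A ∪ {0}) (hy₃ : y₃ ∈ vset (x + y₂) A ∪ {0}) :
    y₂ + y₃ ∈ vset x A ∪ {0} := by
  rcases hy₃ with ⟨a, ha, rfl⟩ | rfl
  · refine Or.inl ⟨a, ha, ?_⟩
    change x + a = y₂ + (x + y₂ + a)
    rw [← add_assoc, add_left_comm y₂ x y₂, ZModModule.add_self, add_zero]
  · rwa [add_zero]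

namespace Cond

variable {D : Ultrafilter V}

theorem le_refl (p : Cond D) : p.le p := by
  refine ⟨subset_rfl, ?_, subset_rfl, fun A hA hA' => absurd hA hA', ?_⟩
  · simp
  · intro x _ y hy A _ hxA
    rw [Finset.sdiff_self, spanOf, Finset.coe_empty, Submodule.span_empty] at hy
    obtain rfl : y = 0 := hy
    exact ⟨Or.inr rfl, by rwa [add_zero]⟩

theorem le_trans {p₁ p₂ p₃ : Cond D} (h₁₂ : p₁.le p₂) (h₂₃ : p₂.le p₃) : p₁.le p₃ := by
  obtain ⟨hu₁₂, hlt₁₂, h𝒜₁₂, hnew₁₂, htr₁₂⟩ := h₁₂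
  obtain ⟨hu₂₃, hlt₂₃, h𝒜₂₃, hnew₂₃, htr₂₃⟩ := h₂₃
  refine ⟨hu₁₂.trans hu₂₃, ?_, h𝒜₁₂.trans h𝒜₂₃, ?_, ?_⟩
  · intro x hx y hy
    obtain ⟨hy₃, hy₁⟩ := Finset.mem_sdiff.1 hy
    by_cases hy₂ : y ∈ p₂.u
    · exact hlt₁₂ x hx y (Finset.mem_sdiff.2 ⟨hy₂, hy₁⟩)
    · exact hlt₂₃ x (hu₁₂ hx) y (Finset.mem_sdiff.2 ⟨hy₃, hy₂⟩)
  · intro A hA hA₁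
    by_cases hA₂ : A ∈ p₂.A
    · exact hnew₁₂ A hA₂ hA₁
    · obtain ⟨hsub, hsub_vset⟩ := hnew₂₃ A hA hA₂
      exact ⟨fun B hB => hsub B (h𝒜₁₂ hB),
        fun B hB x hx => hsub_vset B (h𝒜₁₂ hB) x (spanOf_mono hu₁₂ hx)⟩
  · intro x hx y hy A hA hxA
    obtain ⟨y₂, hy₂, y₃, hy₃, rfl⟩ := mem_spanOf_sdiff_of_subset hu₁₂ hu₂₃ hy
    obtain ⟨hy₂A, hxy₂A⟩ := htr₁₂ x hx y₂ hy₂ A hA hxA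
    have hxy₂ : x + y₂ ∈ spanOf p₂.u :=
      add_mem (spanOf_mono hu₁₂ hx) (spanOf_mono Finset.sdiff_subset hy₂)
    obtain ⟨hy₃A, hxy₂y₃A⟩ := htr₂₃ (x + y₂) hxy₂ y₃ hy₃ A (h𝒜₁₂ hA) hxy₂A
    exact ⟨add_mem_vset_union_zero hy₂A hy₃A, by rwa [← add_assoc]⟩

end Cond

/-- Observation 5: for any ultrafilter `D` on `V`, the relation `≤` on `ℚ_D` is
reflexive and transitive, so `ℚ_D` is a partial order. -/
theorem QD_partial_order (D : Ultrafilter V) :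
    (∀ p : Cond D, p.le p) ∧
    (∀ p₁ p₂ p₃ : Cond D, p₁.le p₂ → p₂.le p₃ → p₁.le p₃) :=
  ⟨Cond.le_refl, fun _ _ _ => Cond.le_trans⟩
end

section
/- For any ultrafilter D on V: if p ∈ Q_D and B₁ ∈ D, then there exist q ∈ Q_D and B₂ ∈ 𝒜_q such that p ≤ q and B₂ ⊆ B₁. In fact q = (u_p, 𝒜_p ∪ {B₂}) works, where B₂ = B₁ ∩ ⋂{x+A : x ∈ span(u_p), A ∈ 𝒜_p, x+A ∈ D}. -/
/-!
Since `span(u_p)` is finite over `𝔽₂` and `𝒜_p` is finite, only finitely many translates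
`x + A` occur, so `B₂` is a finite intersection of members of `D` and lies in `D`. Adding `B₂`
without enlarging `u_p` makes clauses (a) and (d) of the order vacuous, and (c) holds because
`B₂` lies inside every `D`-large translate, including each `A ∈ 𝒜_p` itself (take `x = 0`).
-/

open Set

lemma spanOf_finite (s : Finset V) : (spanOf s).Finite := by
  have : Module.Finite (ZMod 2) (Submodule.span (ZMod 2) (s : Set V)) :=
    Module.Finite.span_of_finite _ s.finite_toSet
  have : Finite (Submodule.span (ZMod 2) (s : Set V)) := Module.finite_of_finite (ZMod 2)
  exact Set.toFinite (Submodule.span (ZMod 2) (s : Set V) : Set V)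

lemma spanOf_empty : spanOf ∅ = {0} := by
  simp [spanOf]

@[simp] lemma vset_zero (A : Set V) : vset 0 A = A := by
  simp [vset]

namespace Cond

variable {D : Ultrafilter V}

def largeTranslates (p : Cond D) : Set (Set V) :=
  {s | ∃ x ∈ spanOf p.u, ∃ A ∈ p.A, vset x A ∈ D ∧ s = vset x A}

lemma largeTranslates_finite (p : Cond D) : p.largeTranslates.Finite := by
  refine (((spanOf_finite p.u).prod p.A.finite_toSet).image fun xA => vset xA.1 xA.2).subset ?_
  rintro s ⟨x, hx, A, hA, -, rfl⟩
  exact ⟨(x, A), ⟨hx, hA⟩, rfl⟩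

lemma sInter_largeTranslates_mem (p : Cond D) : ⋂₀ p.largeTranslates ∈ D := by
  refine (Filter.sInter_mem p.largeTranslates_finite).mpr ?_
  rintro s ⟨x, -, A, -, hxA, rfl⟩
  exact hxA

lemma mem_largeTranslates_of_mem_A {p : Cond D} {A : Set V} (hA : A ∈ p.A) :
    A ∈ p.largeTranslates :=
  ⟨0, Submodule.zero_mem _, A, hA, by simpa using p.mem_D A hA, (vset_zero A).symm⟩

open scoped Classical in
noncomputable def insertA (p : Cond D) (B : Set V) (hB : B ∈ D) : Cond D where
  u := p.u
  A := insert B p.A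
  zero_mem := p.zero_mem
  supp_disj := p.supp_disj
  mem_D := Finset.forall_mem_insert _ _ _ |>.mpr ⟨hB, p.mem_D⟩

lemma le_insertA (p : Cond D) {B : Set V} (hB : B ∈ D)
    (hB_sub : ∀ s ∈ p.largeTranslates, B ⊆ s) : p.le (p.insertA B hB) := by
  have hA : ∀ A ∈ (p.insertA B hB).A, A ∉ p.A → A = B := fun A hA hA' =>
    (Finset.mem_insert.mp hA).resolve_right hA'
  refine ⟨subset_rfl, by simp [insertA], Finset.subset_insert _ _, ?_, ?_⟩
  · intro A hAq hAp
    obtain rfl := hA A hAq hAp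
    exact ⟨fun C hC => hB_sub C (mem_largeTranslates_of_mem_A hC),
      fun C hC x hx hxC => hB_sub _ ⟨x, hx, C, hC, hxC, rfl⟩⟩
  · intro x _ y hy A _ hxA
    obtain rfl : y = 0 := by simpa [insertA, spanOf_empty] using hy
    exact ⟨Or.inr rfl, by rwa [add_zero]⟩

end Cond

open scoped Classical in
/-- Observation 6: if `p ∈ ℚ_D` and `B₁ ∈ D`, there are `q ∈ ℚ_D` and `B₂ ∈ 𝒜_q` with
`p ≤ q` and `B₂ ⊆ B₁`; in fact `q = (u_p, 𝒜_p ∪ {B₂})` works, where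
`B₂ = B₁ ∩ ⋂ {x+A : x ∈ span(u_p), A ∈ 𝒜_p, x+A ∈ D}`. -/
theorem QD_extend_below (D : Ultrafilter V) (p : Cond D) (B₁ : Set V) (hB₁ : B₁ ∈ D) :
    ∃ (q : Cond D) (B₂ : Set V),
      B₂ = B₁ ∩ ⋂₀ {s : Set V | ∃ x ∈ spanOf p.u, ∃ A ∈ p.A, vset x A ∈ D ∧ s = vset x A} ∧
      q.u = p.u ∧ q.A = insert B₂ p.A ∧
      B₂ ∈ q.A ∧ p.le q ∧ B₂ ⊆ B₁ := by
  set B₂ := B₁ ∩ ⋂₀ p.largeTranslates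
  have hB₂ : B₂ ∈ D := Filter.inter_mem hB₁ p.sInter_largeTranslates_mem
  have hB₂_sub : ∀ s ∈ p.largeTranslates, B₂ ⊆ s := fun s hs =>
    inter_subset_right.trans (sInter_subset_of_mem hs)
  exact ⟨p.insertA B₂ hB₂, B₂, rfl, rfl, rfl, Finset.mem_insert_self _ _,
    p.le_insertA hB₂ hB₂_sub, inter_subset_left⟩
end

section
/- Let 𝒜 be an infinite family of pairwise almost disjoint infinite-dimensional subspaces of V. Then there exists a nonprincipal ultrafilter D on V such that: (a) no member of 𝒜 (viewed as a subset of V) belongs to D; (b) for every A ∈ D, the set {v ∈ V : v+A ∈ D} belongs to D; (c) every subspace of V of finite codimension belongs to D. -/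
open Set

/-- The basis vectors `x_n` of `V`. -/
noncomputable def xb (n : ℕ) : V := Finsupp.single n 1

/-- `S[n] = (⊕_{l<n} 𝔽₂ x_l) + S`. -/
def brack (S : Submodule (ZMod 2) V) (n : ℕ) : Set V :=
  {v | ∃ w ∈ Submodule.span (ZMod 2) {z : V | ∃ l < n, z = xb l}, ∃ s ∈ S, v = w + s}

/-!
Let `F` be the filter generated by the subspaces of finite codimension and by the complements of
the cosets of members of `𝒜`. It is proper: given a subspace `W` of finite codimension and cosets
of finitely many `S₁, …, Sₙ ∈ 𝒜`, pick another `S ∈ 𝒜`; it meets `W` in an infinite set but each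
coset in a finite set. Both kinds of generators are stable under the sum of ultrafilters, so the
ultrafilters extending `F` form a nonempty closed subsemigroup of `(βV, +)`, which contains an
idempotent `D` by the Ellis–Numakura lemma. Idempotence is (b), since in characteristic 2 the
translate `v + A` is `{x | v + x ∈ A}`.
-/

open Filter

attribute [local instance] Ultrafilter.add Ultrafilter.addSemigroup

namespace Ultrafilter

theorem isClosed_setOf_coe_le {α : Type*} (f : Filter α) :
    IsClosed {U : Ultrafilter α | ↑U ≤ f} := by
  have : {U : Ultrafilter α | ↑U ≤ f} = ⋂ s ∈ f, {U | s ∈ U} := by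
    ext U
    simp [Filter.le_def]
  rw [this]
  exact isClosed_biInter fun s _ => ultrafilter_isClosed_basic s

theorem exists_add_idempotent_le {M : Type*} [AddSemigroup M] (f : Filter M) [f.NeBot]
    (hf : ∀ U U' : Ultrafilter M, ↑U ≤ f → ↑U' ≤ f → ↑(U + U') ≤ f) :
    ∃ U : Ultrafilter M, ↑U ≤ f ∧ U + U = U := by
  obtain ⟨U, hUf, hUU⟩ := exists_idempotent_in_compact_add_subsemigroup continuous_add_left
    {U : Ultrafilter M | ↑U ≤ f} ⟨.of f, of_le f⟩ (isClosed_setOf_coe_le f).isCompact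
    fun U hU U' hU' => hf U U' hU hU'
  exact ⟨U, hUf, hUU⟩

theorem setOf_preimage_add_mem {M : Type*} [AddSemigroup M] {U : Ultrafilter M} (hU : U + U = U)
    {A : Set M} (hA : A ∈ U) : {v | (v + ·) ⁻¹' A ∈ U} ∈ U := by
  rw [← hU] at hA
  exact hA

end Ultrafilter

theorem finite_inter_preimage_add {G S : Type*} [AddGroup G] [SetLike S G] [AddSubgroupClass S G]
    {H H' : S} (h : ((H : Set G) ∩ H').Finite) (v : G) :
    ((H : Set G) ∩ (v + ·) ⁻¹' H').Finite := by
  rcases eq_empty_or_nonempty ((H : Set G) ∩ (v + ·) ⁻¹' H') with he | ⟨x₀, hx₀H, hx₀H'⟩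
  · rw [he]
    exact finite_empty
  refine (h.preimage (add_right_injective (-x₀)).injOn).subset ?_
  rintro x ⟨hxH, hxH'⟩
  refine ⟨add_mem (neg_mem hx₀H) hxH, ?_⟩
  simpa [add_assoc] using add_mem (neg_mem hx₀H') hxH'

section FiniteCodimension

variable {R M : Type*} [Ring R] [IsNoetherianRing R] [AddCommGroup M] [Module R M]

theorem Submodule.finite_quotient_inf {W₁ W₂ : Submodule R M} [Module.Finite R (M ⧸ W₁)]
    [Module.Finite R (M ⧸ W₂)] : Module.Finite R (M ⧸ (W₁ ⊓ W₂)) := by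
  have hker : W₁ ⊓ W₂ = LinearMap.ker (W₁.mkQ.prod W₂.mkQ) := by
    rw [LinearMap.ker_prod, ker_mkQ, ker_mkQ]
  exact Module.Finite.of_injective ((W₁ ⊓ W₂).liftQ _ hker.le)
    (LinearMap.ker_eq_bot.1 ((W₁ ⊓ W₂).ker_liftQ_eq_bot' _ hker))

theorem Submodule.fg_of_fg_inf_of_finite_quotient {S W : Submodule R M} [Module.Finite R (M ⧸ W)]
    (h : (S ⊓ W).FG) : S.FG :=
  S.fg_of_fg_map_of_fg_inf_ker W.mkQ (IsNoetherian.noetherian _) (by rwa [W.ker_mkQ])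

theorem Submodule.infinite_inter_of_not_finite {S W : Submodule R M} [Module.Finite R (M ⧸ W)]
    (hS : ¬ Module.Finite R S) : ((S : Set M) ∩ W).Infinite := by
  intro hfin
  have : Finite ↥(S ⊓ W) := hfin.to_subtype
  exact hS (Module.Finite.iff_fg.2
    (fg_of_fg_inf_of_finite_quotient (W := W) (Module.Finite.iff_fg.1 inferInstance)))

end FiniteCodimension

section CosetAvoidingFilter

variable {R M : Type*} [Ring R] [AddCommGroup M] [Module R M]

variable (R M) in
def finiteCodimFilter : Filter M :=
  ⨅ (W : Submodule R M) (_ : Module.Finite R (M ⧸ W)), 𝓟 (W : Set M)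

def cosetAvoidingFilter (𝒜 : Set (Submodule R M)) : Filter M :=
  finiteCodimFilter R M ⊓ ⨅ p : 𝒜 × M, 𝓟 {x | p.2 + x ∉ (p.1 : Submodule R M)}

theorem le_cosetAvoidingFilter_iff {𝒜 : Set (Submodule R M)} {f : Filter M} :
    f ≤ cosetAvoidingFilter 𝒜 ↔
      (∀ W : Submodule R M, Module.Finite R (M ⧸ W) → (W : Set M) ∈ f) ∧
      ∀ S ∈ 𝒜, ∀ v : M, {x | v + x ∉ S} ∈ f := by
  simp [cosetAvoidingFilter, finiteCodimFilter]

theorem add_le_cosetAvoidingFilter {𝒜 : Set (Submodule R M)} (U U' : Ultrafilter M)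
    (hU : ↑U ≤ cosetAvoidingFilter 𝒜) (hU' : ↑U' ≤ cosetAvoidingFilter 𝒜) :
    ↑(U + U') ≤ cosetAvoidingFilter 𝒜 := by
  rw [le_cosetAvoidingFilter_iff] at hU hU' ⊢
  refine ⟨fun W hW => ?_, fun S hS v => ?_⟩
  · show ∀ᶠ m in ↑(U + U'), m ∈ W
    rw [Ultrafilter.eventually_add]
    filter_upwards [hU.1 W hW] with m hm
    filter_upwards [hU'.1 W hW] with m' hm'
    exact W.add_mem hm hm'
  · show ∀ᶠ m in ↑(U + U'), v + m ∉ S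
    rw [Ultrafilter.eventually_add]
    refine Eventually.of_forall fun m => ?_
    filter_upwards [hU'.2 S hS (v + m)] with m' hm'
    rwa [add_assoc] at hm'

variable [IsNoetherianRing R]

theorem hasBasis_finiteCodimFilter :
    (finiteCodimFilter R M).HasBasis (fun W : Submodule R M => Module.Finite R (M ⧸ W)) (↑) :=
  hasBasis_biInf_principal'
    (fun _ _ _ _ => ⟨_, Submodule.finite_quotient_inf, inter_subset_left, inter_subset_right⟩)
    ⟨⊤, inferInstance⟩

theorem exists_mem_forall_add_notMem {𝒜 : Set (Submodule R M)} (hinf : 𝒜.Infinite)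
    (hdim : ∀ S ∈ 𝒜, ¬ Module.Finite R S)
    (had : ∀ S₁ ∈ 𝒜, ∀ S₂ ∈ 𝒜, S₁ ≠ S₂ → ((S₁ : Set M) ∩ (S₂ : Set M)).Finite)
    {W : Submodule R M} [Module.Finite R (M ⧸ W)] {t : Set (𝒜 × M)} (ht : t.Finite) :
    ∃ x ∈ W, ∀ p ∈ t, p.2 + x ∉ (p.1 : Submodule R M) := by
  obtain ⟨S, hS, hSt⟩ := (hinf.sdiff (ht.image fun p => (p.1 : Submodule R M))).nonempty
  have hbad : (⋃ p ∈ t, (S : Set M) ∩ (p.2 + ·) ⁻¹' (p.1 : Submodule R M)).Finite :=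
    ht.biUnion fun p hp => finite_inter_preimage_add
      (had S hS p.1 p.1.2 fun h => hSt ⟨p, hp, h.symm⟩) p.2
  obtain ⟨x, ⟨hxS, hxW⟩, hx⟩ :=
    ((Submodule.infinite_inter_of_not_finite (W := W) (hdim S hS)).sdiff hbad).nonempty
  exact ⟨x, hxW, fun p hp hxp => hx (mem_biUnion hp ⟨hxS, hxp⟩)⟩

theorem neBot_cosetAvoidingFilter {𝒜 : Set (Submodule R M)} (hinf : 𝒜.Infinite)
    (hdim : ∀ S ∈ 𝒜, ¬ Module.Finite R S)
    (had : ∀ S₁ ∈ 𝒜, ∀ S₂ ∈ 𝒜, S₁ ≠ S₂ → ((S₁ : Set M) ∩ (S₂ : Set M)).Finite) :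
    (cosetAvoidingFilter 𝒜).NeBot := by
  refine (hasBasis_finiteCodimFilter.inf (hasBasis_iInf_principal_finite _)).neBot_iff.2 ?_
  rintro ⟨W, t⟩ ⟨hW, ht⟩
  obtain ⟨x, hxW, hx⟩ := exists_mem_forall_add_notMem hinf hdim had (W := W) ht
  exact ⟨x, hxW, mem_iInter₂.2 hx⟩

end CosetAvoidingFilter

/-- Fact 9: if `𝒜` is an infinite family of pairwise almost disjoint infinite-dimensional
subspaces of `V`, then there is a nonprincipal ultrafilter `D` on `V` disjoint from `𝒜`,
containing all subspaces of finite codimension, and such that `A ∈ D` implies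
`v + A ∈ D` for `D`-almost all `v`. -/
theorem exists_good_ultrafilter (𝒜 : Set (Submodule (ZMod 2) V)) (hinf : 𝒜.Infinite)
    (hdim : ∀ S ∈ 𝒜, ¬ Module.Finite (ZMod 2) ↥S)
    (had : ∀ S₁ ∈ 𝒜, ∀ S₂ ∈ 𝒜, S₁ ≠ S₂ → ((S₁ : Set V) ∩ (S₂ : Set V)).Finite) :
    ∃ D : Ultrafilter V,
      (∀ v : V, ({v} : Set V) ∉ D) ∧
      (∀ S ∈ 𝒜, (S : Set V) ∉ D) ∧
      (∀ A ∈ D, {v : V | (fun a => v + a) '' A ∈ D} ∈ D) ∧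
      (∀ W : Submodule (ZMod 2) V, Module.Finite (ZMod 2) (V ⧸ W) → (W : Set V) ∈ D) := by
  have := neBot_cosetAvoidingFilter hinf hdim had
  obtain ⟨D, hDF, hDD⟩ := Ultrafilter.exists_add_idempotent_le _
    (add_le_cosetAvoidingFilter (𝒜 := 𝒜))
  obtain ⟨hcodim, hcoset⟩ := le_cosetAvoidingFilter_iff.1 hDF
  obtain ⟨S₀, hS₀⟩ := hinf.nonempty
  refine ⟨D, fun v hv => ?_, fun S hS hSD => ?_, fun A hA => ?_, hcodim⟩
  · obtain ⟨_, rfl, hvv⟩ := D.nonempty_of_mem (inter_mem hv (hcoset S₀ hS₀ v))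
    exact hvv (by rw [ZModModule.add_self]; exact S₀.zero_mem)
  · obtain ⟨x, hxS, hx⟩ := D.nonempty_of_mem (inter_mem hSD (hcoset S hS 0))
    exact hx (by rwa [zero_add])
  · simp_rw [image_add_left, ZModModule.neg_eq_self]
    exact D.setOf_preimage_add_mem hDD hA
end

section
/- Let S¹ ≠ S² be subspaces of V with S¹ ∩ S² finite, say |S¹ ∩ S²| = k. Then for every n < ω, |S¹[n] ∩ S²[n]| ≤ k·2^{2n}; in particular S¹[n] ∩ S²[n] is finite. -/
/-! `S[n]` is the union of the `2^n` cosets `w + S` with `w ∈ span {x_l : l < n}`. A coset of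
`S¹` and a coset of `S²` meet, if at all, in a single coset of `S¹ ∩ S²`, so `S¹[n] ∩ S²[n]` is
covered by `2^n · 2^n` translates of `S¹ ∩ S²`. -/

open Set

open scoped Pointwise

namespace AddSubgroup

variable {G : Type*} [AddGroup G] (H₁ H₂ : AddSubgroup G)

theorem vadd_inter_vadd_eq_empty_or (a b : G) :
    (a +ᵥ (H₁ : Set G)) ∩ (b +ᵥ (H₂ : Set G)) = ∅ ∨
      ∃ v : G, (a +ᵥ (H₁ : Set G)) ∩ (b +ᵥ (H₂ : Set G)) = v +ᵥ ((H₁ : Set G) ∩ H₂) := by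
  rcases Set.eq_empty_or_nonempty ((a +ᵥ (H₁ : Set G)) ∩ (b +ᵥ (H₂ : Set G))) with h | ⟨v, ha, hb⟩
  · exact .inl h
  · refine .inr ⟨v, ?_⟩
    rw [Set.vadd_set_inter, (leftAddCoset_eq_iff H₁).mpr ((mem_leftAddCoset_iff a).mp ha),
      (leftAddCoset_eq_iff H₂).mpr ((mem_leftAddCoset_iff b).mp hb)]

theorem finite_vadd_inter_vadd (hfin : ((H₁ : Set G) ∩ H₂).Finite) (a b : G) :
    ((a +ᵥ (H₁ : Set G)) ∩ (b +ᵥ (H₂ : Set G))).Finite := by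
  rcases vadd_inter_vadd_eq_empty_or H₁ H₂ a b with h | ⟨v, h⟩
  · simp [h]
  · rw [h]; exact hfin.vadd_set

theorem ncard_vadd_inter_vadd_le (a b : G) :
    ((a +ᵥ (H₁ : Set G)) ∩ (b +ᵥ (H₂ : Set G))).ncard ≤ ((H₁ : Set G) ∩ H₂).ncard := by
  rcases vadd_inter_vadd_eq_empty_or H₁ H₂ a b with h | ⟨v, h⟩
  · simp [h]
  · rw [h, Set.ncard_vadd_set]

variable {ι κ : Type*} (a : ι → G) (b : κ → G)

theorem finite_iUnion_vadd_inter_iUnion_vadd [Finite ι] [Finite κ]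
    (hfin : ((H₁ : Set G) ∩ H₂).Finite) :
    ((⋃ i, a i +ᵥ (H₁ : Set G)) ∩ ⋃ j, b j +ᵥ (H₂ : Set G)).Finite := by
  rw [Set.iUnion_inter_iUnion]
  exact Set.finite_iUnion fun i => Set.finite_iUnion fun j =>
    finite_vadd_inter_vadd H₁ H₂ hfin (a i) (b j)

theorem ncard_iUnion_vadd_inter_iUnion_vadd_le [Fintype ι] [Fintype κ] :
    ((⋃ i, a i +ᵥ (H₁ : Set G)) ∩ ⋃ j, b j +ᵥ (H₂ : Set G)).ncard ≤
      Fintype.card ι * Fintype.card κ * ((H₁ : Set G) ∩ H₂).ncard := by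
  rw [Set.iUnion_inter_iUnion]
  calc _ ≤ ∑ i, (⋃ j, (a i +ᵥ (H₁ : Set G)) ∩ (b j +ᵥ (H₂ : Set G))).ncard :=
        Set.ncard_iUnion_le_of_fintype _
    _ ≤ ∑ _i : ι, ∑ _j : κ, ((H₁ : Set G) ∩ H₂).ncard := by
        gcongr with i
        exact (Set.ncard_iUnion_le_of_fintype _).trans
          (Finset.sum_le_sum fun j _ => ncard_vadd_inter_vadd_le H₁ H₂ (a i) (b j))
    _ = _ := by simp [mul_assoc]

end AddSubgroup

theorem brack_eq_iUnion_vadd (S : Submodule (ZMod 2) V) (n : ℕ) :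
    brack S n = ⋃ c : Fin n → ZMod 2, (∑ l, c l • xb l) +ᵥ (S : Set V) := by
  have hgen : {z : V | ∃ l < n, z = xb l} = Set.range fun l : Fin n => xb l := by
    ext z
    simp [Fin.exists_iff, eq_comm]
  ext v
  simp only [brack, hgen, Submodule.mem_span_range_iff_exists_fun, Set.mem_ofPred_eq,
    Set.mem_iUnion, Set.mem_vadd_set, SetLike.mem_coe, vadd_eq_add]
  constructor
  · rintro ⟨w, ⟨c, rfl⟩, s, hs, rfl⟩
    exact ⟨c, s, hs, rfl⟩
  · rintro ⟨c, s, hs, rfl⟩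
    exact ⟨_, ⟨c, rfl⟩, s, hs, rfl⟩

theorem brack_inter_finite_general (S₁ S₂ : Submodule (ZMod 2) V) (k : ℕ)
    (hfin : ((S₁ : Set V) ∩ (S₂ : Set V)).Finite)
    (hk : ((S₁ : Set V) ∩ (S₂ : Set V)).ncard = k) :
    ∀ n : ℕ, (brack S₁ n ∩ brack S₂ n).Finite ∧
      (brack S₁ n ∩ brack S₂ n).ncard ≤ k * 2 ^ (2 * n) := by
  intro n
  let w : (Fin n → ZMod 2) → V := fun c => ∑ l, c l • xb l
  rw [brack_eq_iUnion_vadd, brack_eq_iUnion_vadd]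
  refine ⟨AddSubgroup.finite_iUnion_vadd_inter_iUnion_vadd
    S₁.toAddSubgroup S₂.toAddSubgroup w w hfin, ?_⟩
  refine (AddSubgroup.ncard_iUnion_vadd_inter_iUnion_vadd_le
    S₁.toAddSubgroup S₂.toAddSubgroup w w).trans_eq ?_
  simp only [Submodule.coe_toAddSubgroup, hk, Fintype.card_fun, ZMod.card, Fintype.card_fin]
  ring

/-- Subclaim 1(a): if `S¹ ≠ S²` are subspaces of `V` with `|S¹ ∩ S²| = k` finite,
then `|S¹[n] ∩ S²[n]| ≤ k·2^{2n}`; in particular `S¹[n] ∩ S²[n]` is finite. -/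
theorem brack_inter_finite (S₁ S₂ : Submodule (ZMod 2) V) (hne : S₁ ≠ S₂) (k : ℕ)
    (hfin : ((S₁ : Set V) ∩ (S₂ : Set V)).Finite)
    (hk : ((S₁ : Set V) ∩ (S₂ : Set V)).ncard = k) :
    ∀ n : ℕ, (brack S₁ n ∩ brack S₂ n).Finite ∧
      (brack S₁ n ∩ brack S₂ n).ncard ≤ k * 2 ^ (2 * n) :=
  brack_inter_finite_general S₁ S₂ k hfin hk
end

section
/- Let 𝒜 be an infinite family of pairwise almost disjoint infinite-dimensional subspaces of V. Then for every subspace W ⊆ V of finite codimension, every k < ω, all S₁, …, S_k ∈ 𝒜 and all n₁, …, n_k < ω, the set W ∩ (V \ S₁[n₁]) ∩ … ∩ (V \ S_k[n_k]) is nonempty; hence the family X = {V \ S[n] : S ∈ 𝒜, n < ω} ∪ {W : W a subspace of V of finite codimension} has the finite intersection property. -/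
/-!
Since there are infinitely many members of `𝒜`, pick `S₀ ∈ 𝒜` different from `S₁, …, S_k`.
Intersecting with a subspace of finite codimension keeps `S₀ ∩ W` infinite-dimensional, while
`S_i[n_i] ∩ S₀` is finite because `S_i ∩ S₀` is and `S_i[n_i]` exceeds `S_i` by a
finite-dimensional space. So some vector of `S₀ ∩ W` avoids every `S_i[n_i]`. A finite
subfamily of `X` is covered by this case after intersecting its finite-codimensional members.
-/

open Set

namespace Submodule

variable {R M : Type*} [Ring R] [AddCommGroup M] [Module R M]

theorem finite_coe_iff_fg [Finite R] (p : Submodule R M) : (p : Set M).Finite ↔ p.FG := by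
  rw [← Module.Finite.iff_fg, Module.finite_iff_finite]
  exact Set.finite_coe_iff.symm

variable [IsNoetherianRing R]

theorem fg_of_fg_inf_of_finite_quotient_s8 {p W : Submodule R M} (hpW : (p ⊓ W).FG)
    (hW : Module.Finite R (M ⧸ W)) : p.FG :=
  fg_of_fg_map_of_fg_inf_ker W.mkQ (IsNoetherian.noetherian _) (by rwa [ker_mkQ])

theorem fg_sup_inf_of_fg {T S p : Submodule R M} (hT : T.FG) (hSp : (S ⊓ p).FG) :
    ((T ⊔ S) ⊓ p).FG := by
  refine fg_of_fg_map_of_fg_inf_ker S.mkQ ((hT.map S.mkQ).of_le ?_) ?_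
  · calc map S.mkQ ((T ⊔ S) ⊓ p) ≤ map S.mkQ (T ⊔ S) := map_mono inf_le_left
      _ = map S.mkQ T := by rw [map_sup, mkQ_map_self, sup_bot_eq]
  · rwa [ker_mkQ, inf_right_comm, inf_eq_right.2 (le_sup_right : S ≤ T ⊔ S)]

theorem finite_quotient_iInf {ι : Type*} [Finite ι] (W : ι → Submodule R M)
    (hW : ∀ i, Module.Finite R (M ⧸ W i)) : Module.Finite R (M ⧸ ⨅ i, W i) := by
  let f : M ⧸ ⨅ i, W i →ₗ[R] ((i : ι) → M ⧸ W i) :=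
    (⨅ i, W i).liftQ (LinearMap.pi fun i => (W i).mkQ) (by simp [LinearMap.ker_pi])
  refine Module.Finite.of_injective f ?_
  rw [← LinearMap.ker_eq_bot]
  simp [f, ker_liftQ, LinearMap.ker_pi]

end Submodule

theorem brack_eq_sup (S : Submodule (ZMod 2) V) (n : ℕ) :
    brack S n = ↑(Submodule.span (ZMod 2) {z : V | ∃ l < n, z = xb l} ⊔ S) := by
  ext v
  simp only [brack, SetLike.mem_coe, Submodule.mem_sup, mem_ofPred_eq, eq_comm]

theorem finite_brack_inter {S p : Submodule (ZMod 2) V} (n : ℕ)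
    (h : ((S : Set V) ∩ p).Finite) : (brack S n ∩ p).Finite := by
  have hspan : {z : V | ∃ l < n, z = xb l}.Finite :=
    ((finite_Iio n).image xb).subset fun z ⟨l, hl, hz⟩ => ⟨l, hl, hz.symm⟩
  rw [← Submodule.coe_inf, Submodule.finite_coe_iff_fg] at h
  rw [brack_eq_sup, ← Submodule.coe_inf, Submodule.finite_coe_iff_fg]
  exact Submodule.fg_sup_inf_of_fg (Submodule.fg_span hspan) h

theorem nonempty_inter_iInter_compl_brack {𝒜 : Set (Submodule (ZMod 2) V)} (hinf : 𝒜.Infinite)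
    (hdim : ∀ S ∈ 𝒜, ¬ Module.Finite (ZMod 2) ↥S)
    (had : ∀ S₁ ∈ 𝒜, ∀ S₂ ∈ 𝒜, S₁ ≠ S₂ → ((S₁ : Set V) ∩ (S₂ : Set V)).Finite)
    {W : Submodule (ZMod 2) V} (hW : Module.Finite (ZMod 2) (V ⧸ W)) {ι : Type*} [Finite ι]
    (S : ι → Submodule (ZMod 2) V) (n : ι → ℕ) (hS : ∀ i, S i ∈ 𝒜) :
    ((W : Set V) ∩ ⋂ i, (univ \ brack (S i) (n i))).Nonempty := by
  obtain ⟨S₀, hS₀𝒜, hS₀S⟩ := (hinf.sdiff (finite_range S)).nonempty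
  have hS₀W : ((S₀ ⊓ W : Submodule (ZMod 2) V) : Set V).Infinite := fun hfin =>
    hdim S₀ hS₀𝒜 <| Module.Finite.iff_fg.2 <| Submodule.fg_of_fg_inf_of_finite_quotient_s8
      ((Submodule.finite_coe_iff_fg _).1 hfin) hW
  have hbrack : (⋃ i, brack (S i) (n i) ∩ S₀).Finite :=
    finite_iUnion fun i => finite_brack_inter (n i)
      (had _ (hS i) _ hS₀𝒜 fun h => hS₀S ⟨i, h⟩)
  obtain ⟨v, ⟨hvS₀, hvW⟩, hv⟩ := (hS₀W.sdiff hbrack).nonempty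
  exact ⟨v, hvW, mem_iInter.2 fun i => ⟨trivial, fun hvi => hv (mem_iUnion.2 ⟨i, hvi, hvS₀⟩)⟩⟩

/-- Subclaim 1: if `𝒜` is an infinite family of pairwise almost disjoint
infinite-dimensional subspaces of `V`, then for every subspace `W` of finite codimension
and all `S₁,…,S_k ∈ 𝒜`, `n₁,…,n_k < ω`, the set `W ∩ (V \ S₁[n₁]) ∩ … ∩ (V \ S_k[n_k])`
is nonempty; hence the family
`X = {V \ S[n] : S ∈ 𝒜, n < ω} ∪ {W : W of finite codimension}` has the FIP. -/
theorem X_has_FIP (𝒜 : Set (Submodule (ZMod 2) V)) (hinf : 𝒜.Infinite)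
    (hdim : ∀ S ∈ 𝒜, ¬ Module.Finite (ZMod 2) ↥S)
    (had : ∀ S₁ ∈ 𝒜, ∀ S₂ ∈ 𝒜, S₁ ≠ S₂ → ((S₁ : Set V) ∩ (S₂ : Set V)).Finite) :
    (∀ W : Submodule (ZMod 2) V, Module.Finite (ZMod 2) (V ⧸ W) →
      ∀ (k : ℕ) (S : Fin k → Submodule (ZMod 2) V) (n : Fin k → ℕ),
        (∀ i, S i ∈ 𝒜) →
        ((W : Set V) ∩ ⋂ i, (Set.univ \ brack (S i) (n i))).Nonempty) ∧
    (∀ F : Finset (Set V),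
      (↑F : Set (Set V)) ⊆ ({A | (∃ S ∈ 𝒜, ∃ n : ℕ, A = Set.univ \ brack S n) ∨
          (∃ W : Submodule (ZMod 2) V, Module.Finite (ZMod 2) (V ⧸ W) ∧ A = (W : Set V))}) →
      (⋂₀ (↑F : Set (Set V))).Nonempty) := by
  refine ⟨fun W hW k => nonempty_inter_iInter_compl_brack hinf hdim had hW, fun F hF => ?_⟩
  choose S hS n hSn using
    fun A : {A : F // ∃ S ∈ 𝒜, ∃ n : ℕ, (A : Set V) = univ \ brack S n} => A.2
  choose W hW hWA using fun A : {A : F // ∃ W : Submodule (ZMod 2) V,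
    Module.Finite (ZMod 2) (V ⧸ W) ∧ (A : Set V) = W} => A.2
  obtain ⟨v, hvW, hvS⟩ := nonempty_inter_iInter_compl_brack hinf hdim had
    (Submodule.finite_quotient_iInf W hW) S n hS
  refine ⟨v, fun A hA => ?_⟩
  rcases hF hA with hA' | hA'
  · rw [show A = _ from hSn ⟨⟨A, hA⟩, hA'⟩]
    exact mem_iInter.1 hvS _
  · rw [show A = _ from hWA ⟨⟨A, hA⟩, hA'⟩]
    exact iInf_le W _ hvW
end

section
/- Let 𝒜 be an infinite family of pairwise almost disjoint infinite-dimensional subspaces of V. Then the set 𝒟 of nonprincipal ultrafilters on V that contain every subspace of V of finite codimension and contain V \ S[n] for every S ∈ 𝒜 and n < ω is nonempty. -/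
open Set

/-!
Take `𝒟` to be the ultrafilters refining the filter generated by the cofinite sets, the
finite-index subgroups and the sets `V \ S[n]`; it suffices that this filter is proper.
Finitely many of its generators mention only finitely many `S ∈ 𝒜`, so some `T ∈ 𝒜` is none of
them. Then `T` is infinite, so it meets every finite-index subgroup in an infinite set, while
`T ∩ S[n]` is finite: it is a finite union of translates of `T ∩ S`. Hence the cofinite
subsets of the subgroups `T ∩ W` (`W` of finite index) form a proper filter containing
those generators.
-/

open Filter Pointwise

theorem Filter.inf_iInf_neBot_of_forall_finset {α ι : Type*} {f : Filter α} {p : ι → Filter α}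
    (h : ∀ I : Finset ι, (f ⊓ ⨅ i ∈ I, p i).NeBot) : (f ⊓ ⨅ i, p i).NeBot := by
  rw [iInf_eq_iInf_finset, inf_iInf]
  refine iInf_neBot_of_directed' (Antitone.directed_ge fun I J hIJ => ?_) h
  exact inf_le_inf_left f (biInf_mono fun _ hi => Finset.mem_of_subset hIJ hi)

namespace AddSubgroup

variable {G : Type*} [AddGroup G]

theorem infinite_inf_of_finiteIndex {H W : AddSubgroup G} [W.FiniteIndex]
    (hH : (H : Set G).Infinite) : ((H ⊓ W : AddSubgroup G) : Set G).Infinite := by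
  intro hHW
  have : Finite (W.addSubgroupOf H) :=
    ((hHW.preimage Subtype.val_injective.injOn).subset fun x hx => ⟨x.2, hx⟩).to_subtype
  exact hH (Set.finite_coe_iff.mp
    ((finite_iff_finite_and_finiteIndex (W.addSubgroupOf H)).mpr ⟨this, inferInstance⟩))

theorem finite_inter_image_add_left {S T : AddSubgroup G} (hST : ((S : Set G) ∩ T).Finite)
    (g : G) : ((T : Set G) ∩ (g + ·) '' S).Finite := by
  rcases ((T : Set G) ∩ (g + ·) '' S).eq_empty_or_nonempty with h | ⟨_, hv₀T, s₀, hs₀, rfl⟩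
  · rw [h]; exact Set.finite_empty
  refine (hST.image (g + s₀ + ·)).subset ?_
  rintro _ ⟨hvT, s, hs, rfl⟩
  refine ⟨-s₀ + s, ⟨S.add_mem (S.neg_mem hs₀) hs, ?_⟩, by simp [add_assoc]⟩
  have := T.add_mem (T.neg_mem hv₀T) hvT
  rwa [neg_add_rev, add_assoc, neg_add_cancel_left] at this

theorem finite_inter_add {S T : AddSubgroup G} {F : Set G} (hF : F.Finite)
    (hST : ((S : Set G) ∩ T).Finite) : ((T : Set G) ∩ (F + S)).Finite := by
  rw [← Set.iUnion_add_left_image, Set.inter_iUnion₂]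
  exact hF.biUnion fun g _ => finite_inter_image_add_left hST g

variable (G) in
def finiteIndexFilter : Filter G := ⨅ W : {W : AddSubgroup G // W.FiniteIndex}, 𝓟 (W.1 : Set G)

theorem hasBasis_finiteIndexFilter :
    (finiteIndexFilter G).HasBasis (fun W : AddSubgroup G => W.FiniteIndex) (↑) := by
  have : Nonempty {W : AddSubgroup G // W.FiniteIndex} := ⟨⟨⊤, inferInstance⟩⟩
  refine hasBasis_iInf_principal ?_ |>.to_hasBasis (fun W _ => ⟨W.1, W.2, subset_rfl⟩)
    fun W hW => ⟨⟨W, hW⟩, trivial, subset_rfl⟩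
  rintro ⟨W₁, h₁⟩ ⟨W₂, h₂⟩
  exact ⟨⟨W₁ ⊓ W₂, inferInstance⟩, inf_le_left (a := W₁) (b := W₂), inf_le_right (a := W₁)⟩

theorem mem_finiteIndexFilter (W : AddSubgroup G) [W.FiniteIndex] :
    (W : Set G) ∈ finiteIndexFilter G :=
  hasBasis_finiteIndexFilter.mem_of_mem ‹_›

theorem finiteIndexFilter_inf_cofinite_inf_principal_neBot {H : AddSubgroup G}
    (hH : (H : Set G).Infinite) : (finiteIndexFilter G ⊓ cofinite ⊓ 𝓟 (H : Set G)).NeBot := by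
  rw [inf_right_comm, inf_comm (finiteIndexFilter G)]
  refine ((hasBasis_finiteIndexFilter.principal_inf _).inf_neBot_iff).mpr fun W hW s hs => ?_
  have := (infinite_inf_of_finiteIndex (W := W) hH).sdiff hs
  rw [Set.sdiff_compl] at this
  exact this.nonempty

end AddSubgroup

theorem Submodule.finiteIndex_toAddSubgroup {R M : Type*} [Ring R] [Finite R] [AddCommGroup M]
    [Module R M] (W : Submodule R M) [Module.Finite R (M ⧸ W)] : W.toAddSubgroup.FiniteIndex :=
  AddSubgroup.finiteIndex_iff_finite_quotient.mpr (Module.finite_of_finite R (M := M ⧸ W))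

theorem Submodule.finite_span_of_finite {R M : Type*} [Ring R] [Finite R] [AddCommGroup M]
    [Module R M] {s : Set M} (hs : s.Finite) : (span R s : Set M).Finite :=
  have := Module.Finite.span_of_finite R hs
  have := Module.finite_of_finite R (M := span R s)
  Set.toFinite _

theorem brack_eq_span_add (S : Submodule (ZMod 2) V) (n : ℕ) :
    brack S n = (Submodule.span (ZMod 2) {z : V | ∃ l < n, z = xb l} : Set V) + S := by
  ext v
  simp only [brack, Set.mem_ofPred_eq, Set.mem_add, SetLike.mem_coe, eq_comm]

theorem finite_inter_brack {S T : Submodule (ZMod 2) V} (hST : ((S : Set V) ∩ T).Finite)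
    (n : ℕ) : ((T : Set V) ∩ brack S n).Finite := by
  rw [brack_eq_span_add]
  refine AddSubgroup.finite_inter_add (S := S.toAddSubgroup) (T := T.toAddSubgroup)
    (Submodule.finite_span_of_finite ?_) hST
  exact ((Set.finite_Iio n).image xb).subset fun _ ⟨l, hl, hz⟩ => ⟨l, hl, hz.symm⟩

-- `𝒟` is the set of ultrafilters finer than this filter: over `𝔽₂` a subspace has finite
-- codimension iff it has finite index.
noncomputable def scrDFilter (𝒜 : Set (Submodule (ZMod 2) V)) : Filter V :=
  AddSubgroup.finiteIndexFilter V ⊓ cofinite ⊓ ⨅ S : 𝒜, ⨅ n : ℕ, 𝓟 (Set.univ \ brack S n)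

theorem scrDFilter_neBot {𝒜 : Set (Submodule (ZMod 2) V)} (hinf : 𝒜.Infinite)
    (hdim : ∀ S ∈ 𝒜, ¬ Module.Finite (ZMod 2) ↥S)
    (had : ∀ S₁ ∈ 𝒜, ∀ S₂ ∈ 𝒜, S₁ ≠ S₂ → ((S₁ : Set V) ∩ (S₂ : Set V)).Finite) :
    (scrDFilter 𝒜).NeBot := by
  refine Filter.inf_iInf_neBot_of_forall_finset fun I => ?_
  obtain ⟨T, hT, hTI⟩ := (hinf.sdiff ((I.finite_toSet).image Subtype.val)).nonempty
  have hTinf : (T : Set V).Infinite := fun h =>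
    hdim T hT (Module.finite_iff_finite.mpr h.to_subtype)
  refine (AddSubgroup.finiteIndexFilter_inf_cofinite_inf_principal_neBot (H := T.toAddSubgroup)
    hTinf).mono (le_inf inf_le_left (le_iInf₂ fun S hS => le_iInf fun n => ?_))
  have hST : (S : Submodule (ZMod 2) V) ≠ T := fun h => hTI ⟨S, hS, h⟩
  have hfin := finite_inter_brack (had S S.2 T hT hST) n
  refine le_principal_iff.mpr (mem_inf_of_inter (mem_inf_of_right hfin.compl_mem_cofinite)
    (mem_principal_self (T : Set V)) ?_)
  rintro v ⟨hv, hvT⟩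
  exact ⟨trivial, fun hb => hv ⟨hvT, hb⟩⟩

/-- Subclaim 1 (consequence): if `𝒜` is an infinite family of pairwise almost disjoint
infinite-dimensional subspaces of `V`, then the set `𝒟` of nonprincipal ultrafilters on
`V` containing every subspace of finite codimension and every `V \ S[n]` (`S ∈ 𝒜`,
`n < ω`) is nonempty. -/
theorem scrD_nonempty (𝒜 : Set (Submodule (ZMod 2) V)) (hinf : 𝒜.Infinite)
    (hdim : ∀ S ∈ 𝒜, ¬ Module.Finite (ZMod 2) ↥S)
    (had : ∀ S₁ ∈ 𝒜, ∀ S₂ ∈ 𝒜, S₁ ≠ S₂ → ((S₁ : Set V) ∩ (S₂ : Set V)).Finite) :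
    ∃ D : Ultrafilter V,
      (∀ v : V, ({v} : Set V) ∉ D) ∧
      (∀ W : Submodule (ZMod 2) V, Module.Finite (ZMod 2) (V ⧸ W) → (W : Set V) ∈ D) ∧
      (∀ S ∈ 𝒜, ∀ n : ℕ, Set.univ \ brack S n ∈ D) := by
  have := scrDFilter_neBot hinf hdim had
  refine ⟨Ultrafilter.of (scrDFilter 𝒜), fun v => ?_, fun W hW => ?_, fun S hS n => ?_⟩
  · refine Ultrafilter.compl_mem_iff_notMem.mp (Ultrafilter.of_le _ ?_)
    exact mem_inf_of_left (mem_inf_of_right (Set.finite_singleton v).compl_mem_cofinite)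
  · have := W.finiteIndex_toAddSubgroup
    exact Ultrafilter.of_le _
      (mem_inf_of_left (mem_inf_of_left (AddSubgroup.mem_finiteIndexFilter W.toAddSubgroup)))
  · exact Ultrafilter.of_le _ (mem_inf_of_right (mem_iInf_of_mem ⟨S, hS⟩ (mem_iInf_of_mem n
      (mem_principal_self _))))
end
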